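/- Let 𝔫 be the sextuple of even characteristics complementary to the standard syzygetic quadruple, namely the six pairs (a,b) ∈ ({0,1}²)²: ((1,0),(0,0)), ((1,0),(0,1)), ((0,1),(0,0)), ((0,1),(1,0)), ((1,1),(0,0)), ((1,1),(1,1)), and let T(Z) = ∏_{(a,b)∈𝔫} θ[a,b](Z) for Z ∈ ℍ₂. Then for Z = [[z₀,z₁],[z₁,z₂]] ∈ ℍ₂ one has T([[z₀,−z₁],[−z₁,z₂]]) = −T([[z₀,z₁],[z₁,z₂]]). -/

import Mathlib

open Matrix Complex

/-- The Siegel upper half space of genus 2: symmetric complex 2×2 matrices with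
positive definite imaginary part. -/
def SiegelH2 : Set (Matrix (Fin 2) (Fin 2) ℂ) :=
  {Z | Z.IsSymm ∧ (Matrix.of fun i j => (Z i j).im).PosDef}

/-- The summand of the theta series with characteristic `(a,b)`:
`exp(πi((g+a/2)ᵀ Z (g+a/2) + bᵀ(g+a/2)))`. -/
noncomputable def thetaTerm (a b : Fin 2 → ℤ) (Z : Matrix (Fin 2) (Fin 2) ℂ)
    (g : Fin 2 → ℤ) : ℂ :=
  Complex.exp (Real.pi * Complex.I *
    ((∑ i, ∑ j, ((g i : ℂ) + (a i : ℂ) / 2) * Z i j * ((g j : ℂ) + (a j : ℂ) / 2)) +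
      ∑ i, (b i : ℂ) * ((g i : ℂ) + (a i : ℂ) / 2)))

/-- The theta constant `θ[a,b](Z) = Σ_{g∈ℤ²} exp(πi((g+a/2)ᵀ Z (g+a/2) + bᵀ(g+a/2)))`. -/
noncomputable def theta (a b : Fin 2 → ℤ) (Z : Matrix (Fin 2) (Fin 2) ℂ) : ℂ :=
  ∑' g : Fin 2 → ℤ, thetaTerm a b Z g

/-- The product `T = T_𝔫` of the six theta constants whose characteristics form the
sextuple complementary to the standard syzygetic quadruple. -/
noncomputable def Tform (Z : Matrix (Fin 2) (Fin 2) ℂ) : ℂ :=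
  theta ![1, 0] ![0, 0] Z * theta ![1, 0] ![0, 1] Z *
  theta ![0, 1] ![0, 0] Z * theta ![0, 1] ![1, 0] Z *
  theta ![1, 1] ![0, 0] Z * theta ![1, 1] ![1, 1] Z

/-!
Flipping the sign of `z₁` is compensated in the theta series by the reindexing
`g ↦ (g₀, −g₁ − a₁)`, i.e. `g + a/2 ↦ (g₀ + a₀/2, −(g₁ + a₁/2))`. This preserves the quadratic
part of the exponent and changes the linear part by `−2b₁g₁ − a₁b₁`, so
`θ[a,b]` picks up the factor `exp(−πi a₁b₁) = (−1)^{a₁b₁}`. In the sextuple only `((1,1),(1,1))`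
has `a₁b₁` odd, whence the sign of `T`.
-/

def thetaReflect (a : Fin 2 → ℤ) : Equiv.Perm (Fin 2 → ℤ) :=
  Function.Involutive.toPerm (fun g => ![g 0, -g 1 - a 1]) fun g => by
    funext i
    fin_cases i <;> simp

lemma thetaReflect_apply (a g : Fin 2 → ℤ) : thetaReflect a g = ![g 0, -g 1 - a 1] := rfl

lemma thetaTerm_thetaReflect (a b : Fin 2 → ℤ) (Z : Matrix (Fin 2) (Fin 2) ℂ)
    (g : Fin 2 → ℤ) :
    thetaTerm a b !![Z 0 0, -Z 0 1; -Z 1 0, Z 1 1] (thetaReflect a g) =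
      exp (-(Real.pi * I * (a 1 * b 1 : ℤ))) * thetaTerm a b Z g := by
  rw [thetaTerm, thetaTerm, ← exp_add, exp_eq_exp_iff_exists_int]
  refine ⟨-(b 1 * g 1), ?_⟩
  simp only [thetaReflect_apply, Fin.sum_univ_two, of_apply, cons_val', cons_val_zero,
    cons_val_one, empty_val', cons_val_fin_one]
  push_cast
  ring

lemma exp_neg_pi_mul_I_mul_intCast (n : ℤ) : exp (-(Real.pi * I * n)) = (-1 : ℂ) ^ n := by
  rw [show -(Real.pi * I * n) = n * -(Real.pi * I) by ring, exp_int_mul, exp_neg,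
    exp_pi_mul_I, inv_neg, inv_one]

lemma theta_neg_offDiag (a b : Fin 2 → ℤ) (Z : Matrix (Fin 2) (Fin 2) ℂ) :
    theta a b !![Z 0 0, -Z 0 1; -Z 1 0, Z 1 1] = (-1 : ℂ) ^ (a 1 * b 1) * theta a b Z := by
  rw [theta, ← Equiv.tsum_eq (thetaReflect a), ← exp_neg_pi_mul_I_mul_intCast, theta,
    ← tsum_mul_left]
  exact tsum_congr (thetaTerm_thetaReflect a b Z)

theorem stmt_9_general (Z : Matrix (Fin 2) (Fin 2) ℂ) :
    Tform !![Z 0 0, -Z 0 1; -Z 1 0, Z 1 1] = -Tform Z := by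
  simp only [Tform, theta_neg_offDiag, cons_val_one, cons_val_zero, mul_zero, mul_one,
    zpow_zero, zpow_one]
  ring

/-- Under the substitution `z₁ ↦ −z₁` the cusp form `T` changes its sign:
`T([[z₀,−z₁],[−z₁,z₂]]) = −T([[z₀,z₁],[z₁,z₂]])` for `Z ∈ ℍ₂`. -/
theorem stmt_9 (Z : Matrix (Fin 2) (Fin 2) ℂ) (hZ : Z ∈ SiegelH2) :
    Tform !![Z 0 0, -Z 0 1; -Z 1 0, Z 1 1] = -Tform Z :=
  stmt_9_general Z
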